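/- arXiv:1611.03166 — 3 statements merged into one kernel-verified Lean document; each statement's English description precedes it below -/
import Mathlib

section
/- Let M be a finite set of segments in the plane. A subset H ∈ NC[M] is called a heart of M if for every J ∈ NC[M] there exists J' ∈ NC[M] with J ⊆ J' and J' ∩ H ≠ ∅. If M admits a heart (i.e., M is a star set), then the Euler characteristic χ(M) = Σ_{i≥0} (−1)^i f_i(M) equals 0. -/
open scoped Classical

/-!
Split a compatible set `S` as `T ∪ U` with `T = S \ H` and `U = S ∩ H`. Since `H` is itself
compatible, `S` is compatible exactly when `T` is and `U` is an arbitrary subset of the link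
`L(T)`, the elements of `H` compatible with all of `T`. Hence
`χ(M) = ∑_T (-1)^|T| ∑_{U ⊆ L(T)} (-1)^|U|`, and every inner sum vanishes because the heart
property makes each `L(T)` nonempty.
-/

namespace Finset

variable {α : Type*}

theorem sum_range_neg_one_pow_mul_card_powerset_filter (M : Finset α) (P : Finset α → Prop)
    [DecidablePred P] :
    ∑ i ∈ range (#M + 1), (-1 : ℤ) ^ i * (#{S ∈ M.powerset | #S = i ∧ P S} : ℤ) =
      ∑ S ∈ M.powerset.filter P, (-1 : ℤ) ^ #S := by
  have hcard : ∀ S ∈ M.powerset.filter P, #S ∈ range (#M + 1) := fun S hS =>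
    mem_range_succ_iff.2 (card_le_card (mem_powerset.1 (mem_filter.1 hS).1))
  rw [← sum_fiberwise_of_maps_to hcard]
  refine sum_congr rfl fun i _ => ?_
  rw [filter_filter, sum_congr rfl fun S hS => by rw [(mem_filter.1 hS).2.2], sum_const,
    nsmul_eq_mul, mul_comm]
  simp only [and_comm]

variable [DecidableEq α] {R : α → α → Prop} {M K S T U : Finset α}

noncomputable def pairwiseSubsets (R : α → α → Prop) (M : Finset α) : Finset (Finset α) :=
  M.powerset.filter fun S => (S : Set α).Pairwise R

noncomputable def link (R : α → α → Prop) (K T : Finset α) : Finset α :=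
  K.filter fun k => ∀ t ∈ T, R k t ∧ R t k

theorem mem_pairwiseSubsets :
    S ∈ pairwiseSubsets R M ↔ S ⊆ M ∧ (S : Set α).Pairwise R := by
  simp [pairwiseSubsets]

theorem sdiff_mem_pairwiseSubsets_sdiff (hS : S ∈ pairwiseSubsets R M) :
    S \ K ∈ pairwiseSubsets R (M \ K) := by
  rw [mem_pairwiseSubsets] at hS ⊢
  exact ⟨sdiff_subset_sdiff hS.1 le_rfl, hS.2.mono (by simp)⟩

theorem inter_subset_link_sdiff (hS : S ∈ pairwiseSubsets R M) :
    S ∩ K ⊆ link R K (S \ K) := by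
  intro k hk
  rw [mem_inter] at hk
  refine mem_filter.2 ⟨hk.2, fun t ht => ?_⟩
  rw [mem_sdiff] at ht
  have hne : k ≠ t := fun h => ht.2 (h ▸ hk.2)
  have hSR := (mem_pairwiseSubsets.1 hS).2
  exact ⟨hSR hk.1 ht.1 hne, hSR ht.1 hk.1 hne.symm⟩

theorem union_mem_pairwiseSubsets (hKM : K ⊆ M) (hK : (K : Set α).Pairwise R)
    (hT : T ∈ pairwiseSubsets R (M \ K)) (hU : U ⊆ link R K T) :
    T ∪ U ∈ pairwiseSubsets R M := by
  rw [mem_pairwiseSubsets] at hT ⊢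
  have hUK : U ⊆ K := hU.trans (filter_subset _ _)
  refine ⟨union_subset (hT.1.trans sdiff_subset) (hUK.trans hKM), ?_⟩
  rw [coe_union, Set.pairwise_union]
  refine ⟨hT.2, hK.mono (by simpa using hUK), fun t ht u hu _ => ?_⟩
  exact ((mem_filter.1 (hU hu)).2 t ht).symm

theorem link_nonempty_of_heart {H : Finset α}
    (hheart : ∀ J ⊆ M, (J : Set α).Pairwise R →
      ∃ J' ⊆ M, (J' : Set α).Pairwise R ∧ J ⊆ J' ∧ (J' ∩ H).Nonempty)
    (hT : T ∈ pairwiseSubsets R (M \ H)) : (link R H T).Nonempty := by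
  rw [mem_pairwiseSubsets] at hT
  obtain ⟨J', -, hJ', hTJ', h, hh⟩ := hheart T (hT.1.trans sdiff_subset) hT.2
  rw [mem_inter] at hh
  refine ⟨h, mem_filter.2 ⟨hh.2, fun t ht => ?_⟩⟩
  have hne : h ≠ t := fun e => (mem_sdiff.1 (hT.1 ht)).2 (e ▸ hh.2)
  exact ⟨hJ' hh.1 (hTJ' ht) hne, hJ' (hTJ' ht) hh.1 hne.symm⟩

theorem sum_pairwiseSubsets_eq_sum_link (hKM : K ⊆ M) (hK : (K : Set α).Pairwise R) :
    ∑ S ∈ pairwiseSubsets R M, (-1 : ℤ) ^ #S =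
      ∑ T ∈ pairwiseSubsets R (M \ K),
        (-1 : ℤ) ^ #T * ∑ U ∈ (link R K T).powerset, (-1 : ℤ) ^ #U := by
  simp_rw [mul_sum, ← pow_add]
  rw [sum_sigma']
  refine sum_nbij' (fun S => ⟨S \ K, S ∩ K⟩) (fun p => p.1 ∪ p.2) (fun S hS => ?_)
    (fun p hp => ?_) (fun S _ => sdiff_union_inter S K) (fun p hp => ?_)
    (fun S _ => by rw [card_sdiff_add_card_inter])
  · exact mem_sigma.2
      ⟨sdiff_mem_pairwiseSubsets_sdiff hS, mem_powerset.2 (inter_subset_link_sdiff hS)⟩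
  · rw [mem_sigma, mem_powerset] at hp
    exact union_mem_pairwiseSubsets hKM hK hp.1 hp.2
  · rw [mem_sigma, mem_powerset, mem_pairwiseSubsets] at hp
    have hTK : Disjoint p.1 K := disjoint_of_subset_left hp.1.1 sdiff_disjoint
    have hUK : p.2 ⊆ K := hp.2.trans (filter_subset _ _)
    ext1
    · simp [union_sdiff_distrib, hTK.sdiff_eq_left, sdiff_eq_empty_iff_subset.2 hUK]
    · simp [union_inter_distrib_right, disjoint_iff_inter_eq_empty.1 hTK, inter_eq_left.2 hUK]

end Finset

open Finset

theorem chi_eq_zero_of_heart_general {α : Type*} [DecidableEq α] (R : α → α → Prop)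
    (M H : Finset α) (hHM : H ⊆ M)
    (hHnc : (H : Set α).Pairwise R)
    (hheart : ∀ J ⊆ M, (J : Set α).Pairwise R →
      ∃ J' ⊆ M, (J' : Set α).Pairwise R ∧ J ⊆ J' ∧ (J' ∩ H).Nonempty) :
    ∑ i ∈ Finset.range (M.card + 1),
        (-1 : ℤ) ^ i *
          ((M.powerset.filter fun S : Finset α =>
            S.card = i ∧ (S : Set α).Pairwise R).card : ℤ) = 0 := by
  rw [sum_range_neg_one_pow_mul_card_powerset_filter, ← pairwiseSubsets,
    sum_pairwiseSubsets_eq_sum_link hHM hHnc]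
  refine sum_eq_zero fun T hT => ?_
  rw [sum_powerset_neg_one_pow_card_of_nonempty (link_nonempty_of_heart hheart hT), mul_zero]

/-- If a finite set `M` (with a symmetric compatibility ("non-crossing") relation `R`)
is a star set, i.e. admits a heart `H` — a compatible subset such that every compatible
subset `J` of `M` extends to a compatible subset `J'` meeting `H` — then the Euler
characteristic `χ(M) = Σ_i (−1)^i f_i(M)` vanishes, where `f_i(M)` counts `i`-element
pairwise compatible subsets of `M`. -/
theorem chi_eq_zero_of_heart {α : Type*} [DecidableEq α] (R : α → α → Prop)
    (hsym : Symmetric R) (M H : Finset α) (hHM : H ⊆ M)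
    (hHnc : (H : Set α).Pairwise R)
    (hheart : ∀ J ⊆ M, (J : Set α).Pairwise R →
      ∃ J' ⊆ M, (J' : Set α).Pairwise R ∧ J ⊆ J' ∧ (J' ∩ H).Nonempty) :
    ∑ i ∈ Finset.range (M.card + 1),
        (-1 : ℤ) ^ i *
          ((M.powerset.filter fun S : Finset α =>
            S.card = i ∧ (S : Set α).Pairwise R).card : ℤ) = 0 :=
  chi_eq_zero_of_heart_general R M H hHM hHnc hheart
end

section
/- Let P be a non-convex simple polygon with vertices in general position, and let M_e be its set of epigonals (chords lying in the exterior of P). Then χ(M_e) = Σ_{i≥0} (−1)^i e_i = 0, i.e., e_1 − e_2 + e_3 − ⋯ + (−1)^n e_{n−3} = 1, where e_i counts i-element sets of pairwise non-crossing epigonals and e_0 = 1. -/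
open scoped BigOperators Classical

/-- A simple polygon in the plane with `n` vertices in general position:
vertices are distinct, no three are collinear, non-adjacent edges are disjoint,
and consecutive edges meet only at their common vertex. -/
structure SimplePolygon (n : ℕ) [NeZero n] where
  V : Fin n → ℝ × ℝ
  three_le : 3 ≤ n
  inj : Function.Injective V
  gen_pos : ∀ i j k : Fin n, i ≠ j → j ≠ k → i ≠ k →
    ¬ Collinear ℝ ({V i, V j, V k} : Set (ℝ × ℝ))
  simple : ∀ i j : Fin n, i ≠ j → i ≠ j + 1 → j ≠ i + 1 →
    segment ℝ (V i) (V (i + 1)) ∩ segment ℝ (V j) (V (j + 1)) = ∅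
  consec : ∀ i : Fin n,
    segment ℝ (V i) (V (i + 1)) ∩ segment ℝ (V (i + 1)) (V (i + 1 + 1)) = {V (i + 1)}

namespace SimplePolygon

variable {n : ℕ} [NeZero n] (P : SimplePolygon n)

/-- The boundary of the polygon: the union of its edges. -/
def boundary : Set (ℝ × ℝ) := ⋃ i : Fin n, segment ℝ (P.V i) (P.V (i + 1))

/-- The interior region: points off the boundary whose connected component of the
complement of the boundary is bounded. -/
def interiorRegion : Set (ℝ × ℝ) :=
  {x | x ∉ P.boundary ∧ Bornology.IsBounded (connectedComponentIn P.boundaryᶜ x)}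

/-- The exterior region: points off the boundary whose connected component of the
complement of the boundary is unbounded. -/
def exteriorRegion : Set (ℝ × ℝ) :=
  {x | x ∉ P.boundary ∧ ¬ Bornology.IsBounded (connectedComponentIn P.boundaryᶜ x)}

/-- The polygon is convex if its closed region (interior together with boundary) is convex. -/
def IsConvexPolygon : Prop := Convex ℝ (P.interiorRegion ∪ P.boundary)

/-- The open segment joining the two vertices of a chord candidate. -/
def chordSeg (p : Fin n × Fin n) : Set (ℝ × ℝ) := openSegment ℝ (P.V p.1) (P.V p.2)

/-- A chord: an (ordered, `p.1 < p.2`) pair of non-consecutive vertices. -/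
def IsChord (p : Fin n × Fin n) : Prop := p.1 < p.2 ∧ p.2 ≠ p.1 + 1 ∧ p.1 ≠ p.2 + 1

/-- A diagonal: a chord lying in the interior of the polygon. -/
def IsDiagonal (p : Fin n × Fin n) : Prop := IsChord p ∧ P.chordSeg p ⊆ P.interiorRegion

/-- An epigonal: a chord lying in the exterior of the polygon. -/
def IsEpigonal (p : Fin n × Fin n) : Prop := IsChord p ∧ P.chordSeg p ⊆ P.exteriorRegion

/-- The set of diagonals. -/
noncomputable def Mdiag : Finset (Fin n × Fin n) := Finset.univ.filter fun p => P.IsDiagonal p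

/-- The set of epigonals. -/
noncomputable def Mepi : Finset (Fin n × Fin n) := Finset.univ.filter fun p => P.IsEpigonal p

/-- Two chords are non-crossing if their open segments are disjoint. -/
def NCr (p q : Fin n × Fin n) : Prop := Disjoint (P.chordSeg p) (P.chordSeg q)

/-- `fcount A i` is the number of `i`-element subsets of `A` that are pairwise non-crossing. -/
noncomputable def fcount (A : Finset (Fin n × Fin n)) (i : ℕ) : ℕ :=
  (A.powerset.filter fun S : Finset (Fin n × Fin n) => S.card = i ∧ (S : Set (Fin n × Fin n)).Pairwise P.NCr).card

/-- The Euler characteristic `χ(A) = Σ (−1)^i f_i(A)`. -/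
noncomputable def chi (A : Finset (Fin n × Fin n)) : ℤ :=
  ∑ i ∈ Finset.range (A.card + 1), (-1 : ℤ) ^ i * P.fcount A i

/-- The interior of the polygon with the open segments of the chords in `I` removed. -/
def cutRegion (I : Finset (Fin n × Fin n)) : Set (ℝ × ℝ) :=
  P.interiorRegion \ ⋃ p ∈ I, P.chordSeg p

/-- The sub-polygon pieces into which `I` divides `P`: the connected components of
the interior with the segments of `I` removed. -/
def pieces (I : Finset (Fin n × Fin n)) : Set (Set (ℝ × ℝ)) :=
  {C | ∃ x ∈ P.cutRegion I, C = connectedComponentIn (P.cutRegion I) x}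

/-- The diagonals of the sub-polygon corresponding to a piece `C`. -/
noncomputable def diagsIn (C : Set (ℝ × ℝ)) : Finset (Fin n × Fin n) :=
  P.Mdiag.filter fun p => P.chordSeg p ⊆ C

/-- `I` divides `P` into convex sub-polygons. -/
def ConvexPartition (I : Finset (Fin n × Fin n)) : Prop :=
  ∀ C ∈ P.pieces I, Convex ℝ C

end SimplePolygon

/-!
If `P` is not convex, some edge `V a V b` of the convex hull of its vertices is not an edge of `P`:
otherwise the frontier of the hull lies on the boundary of `P`, and the closed region of `P` is
the hull. By general position all other vertices lie strictly on one side of the line `V a V b`,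
so the chord `ab` lies in the exterior of `P` and crosses no other chord. The non-crossing sets
of epigonals therefore form a cone with apex `ab`, and toggling `ab` is a sign-reversing
involution on them, so `χ(M_e) = 0`.
-/

open Set

namespace Finset

theorem sum_pairwise_neg_one_pow_card_eq_zero {α : Type*} [DecidableEq α]
    {r : α → α → Prop} [Std.Symm r] {A : Finset α} {e : α} (he : e ∈ A)
    (hcone : ∀ b ∈ A, b ≠ e → r e b) :
    ∑ S ∈ A.powerset.filter (fun S : Finset α => (S : Set α).Pairwise r),
      (-1 : ℤ) ^ S.card = 0 := by
  rw [sum_filter, ← insert_erase he, sum_powerset_insert (notMem_erase e A), ← sum_add_distrib]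
  refine sum_eq_zero fun T hT => ?_
  have hTA : T ⊆ A.erase e := mem_powerset.1 hT
  have heT : e ∉ T := fun h => notMem_erase e A (hTA h)
  have hinsert : ((insert e T : Finset α) : Set α).Pairwise r ↔ (T : Set α).Pairwise r := by
    rw [coe_insert, pairwise_insert_of_symm_of_notMem heT]
    exact and_iff_left fun b hb => hcone b (mem_of_mem_erase (hTA hb)) (ne_of_mem_of_not_mem hb heT)
  simp only [hinsert, card_insert_of_notMem heT, pow_succ]
  split_ifs <;> ring

end Finset

section LevelSets

variable {E : Type*} [AddCommGroup E] [Module ℝ E] {f : E →ₗ[ℝ] ℝ} {c a b : ℝ} {s : Set E}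
  {u v x : E}

theorem LinearMap.apply_combo_lt (hu : f u < c) (hv : f v ≤ c) (ha : 0 < a) (hb : 0 ≤ b)
    (hab : a + b = 1) : f (a • u + b • v) < c := by
  rw [map_add, map_smul, map_smul, smul_eq_mul, smul_eq_mul]
  calc a * f u + b * f v < a * c + b * c :=
        add_lt_add_of_lt_of_le (mul_lt_mul_of_pos_left hu ha) (mul_le_mul_of_nonneg_left hv hb)
    _ = c := by rw [← add_mul, hab, one_mul]

theorem LinearMap.apply_lt_of_mem_openSegment (hu : f u < c) (hv : f v ≤ c)
    (hx : x ∈ openSegment ℝ u v) : f x < c := by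
  obtain ⟨a, b, ha, hb, hab, rfl⟩ := hx
  exact f.apply_combo_lt hu hv ha hb.le hab

theorem LinearMap.eq_or_eq_or_apply_eq_of_mem_segment (hu : f u ≤ c) (hv : f v ≤ c)
    (hx : x ∈ segment ℝ u v) (hfx : f x = c) : x = u ∨ x = v ∨ (f u = c ∧ f v = c) := by
  obtain ⟨a, b, ha, hb, hab, rfl⟩ := hx
  rcases ha.eq_or_lt with rfl | ha
  · simp [show b = 1 by linarith]
  rcases hb.eq_or_lt with rfl | hb
  · simp [show a = 1 by linarith]
  refine Or.inr (Or.inr ⟨?_, ?_⟩)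
  · exact hu.eq_of_not_lt fun h => (f.apply_combo_lt h hv ha hb.le hab).ne hfx
  · rw [add_comm] at hfx hab
    exact hv.eq_of_not_lt fun h => (f.apply_combo_lt h hu hb ha.le hab).ne hfx

theorem LinearMap.mem_convexHull_inter_of_apply_eq (hs : ∀ y ∈ s, f y ≤ c)
    (hx : x ∈ convexHull ℝ s) (hfx : f x = c) : x ∈ convexHull ℝ (s ∩ {y | f y = c}) := by
  set F := convexHull ℝ (s ∩ {y | f y = c})
  have hF : ∀ y ∈ F, f y = c := fun y hy =>
    convexHull_min inter_subset_right (convex_hyperplane f.isLinear c) hy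
  suffices convexHull ℝ s ⊆ {y | f y < c} ∪ F from (this hx).resolve_left hfx.not_lt
  refine convexHull_min (fun y hy => ?_) ?_
  · exact (hs y hy).lt_or_eq.imp_right fun h => subset_convexHull ℝ _ ⟨hy, h⟩
  rintro y (hy | hy) z (hz | hz) a b ha hb hab
  · exact Or.inl (convex_halfSpace_lt f.isLinear c hy hz ha hb hab)
  · rcases ha.eq_or_lt with rfl | ha
    · simpa [show b = 1 by linarith] using Or.inr hz
    · exact Or.inl (f.apply_combo_lt hy (hF z hz).le ha hb hab)
  · rcases hb.eq_or_lt with rfl | hb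
    · simpa [show a = 1 by linarith] using Or.inr hy
    · rw [add_comm] at hab ⊢
      exact Or.inl (f.apply_combo_lt hz (hF y hy).le hb ha hab)
  · exact Or.inr (convex_convexHull ℝ _ hy hz ha hb hab)

end LevelSets

theorem Fin.add_one_ne_self {m : ℕ} [NeZero m] (hm : 2 ≤ m) (i : Fin m) : i + 1 ≠ i :=
  fun h => by
    have := add_left_cancel (h.trans (add_zero i).symm)
    rw [Fin.one_eq_zero_iff] at this
    omega

theorem collinear_setOf_apply_eq {K E : Type*} [Field K] [AddCommGroup E] [Module K E]
    [FiniteDimensional K E] (hE : Module.finrank K E = 2) {f : E →ₗ[K] K} (hf : f ≠ 0) (c : K) :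
    Collinear K {x | f x = c} := by
  have hspan : vectorSpan K {x | f x = c} ≤ LinearMap.ker f := by
    rw [vectorSpan_def, Submodule.span_le]
    rintro _ ⟨x, hx, y, hy, rfl⟩
    simp_all [vsub_eq_sub]
  have hker := Module.Dual.finrank_ker_add_one_of_ne_zero hf
  rw [collinear_iff_finrank_le_one]
  linarith [Submodule.finrank_mono hspan]

theorem not_isBounded_connectedComponentIn_of_ray_subset {E : Type*} [NormedAddCommGroup E]
    [NormedSpace ℝ E] {s : Set E} {x w : E} (hw : w ≠ 0)
    (h : ∀ t : ℝ, 0 ≤ t → x + t • w ∈ s) : ¬ Bornology.IsBounded (connectedComponentIn s x) := by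
  set ray := (fun t : ℝ => x + t • w) '' Ici 0
  have hray : ray ⊆ connectedComponentIn s x :=
    (isPreconnected_Ici.image _ (by fun_prop)).subset_connectedComponentIn
      ⟨0, self_mem_Ici, by simp⟩ (image_subset_iff.2 h)
  intro hbdd
  obtain ⟨r, hr⟩ := (hbdd.subset hray).subset_closedBall x
  have hw' : 0 < ‖w‖ := norm_pos_iff.2 hw
  have ht : 0 ≤ (|r| + 1) / ‖w‖ := by positivity
  have := hr ⟨_, ht, rfl⟩
  rw [Metric.mem_closedBall, dist_eq_norm, add_sub_cancel_left, norm_smul,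
    Real.norm_of_nonneg ht, div_mul_cancel₀ _ hw'.ne'] at this
  linarith [le_abs_self r]

namespace SimplePolygon

variable {n : ℕ} [NeZero n] (P : SimplePolygon n)

instance : Std.Symm P.NCr := ⟨fun _ _ h => h.symm⟩

theorem chi_eq_sum (A : Finset (Fin n × Fin n)) :
    P.chi A = ∑ S ∈ A.powerset.filter
      (fun S : Finset (Fin n × Fin n) => (S : Set (Fin n × Fin n)).Pairwise P.NCr),
      (-1 : ℤ) ^ S.card := by
  rw [← Finset.sum_fiberwise_of_maps_to (g := Finset.card) (t := Finset.range (A.card + 1))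
    fun S hS => Finset.mem_range_succ_iff.2 (Finset.card_le_card
      (Finset.mem_powerset.1 (Finset.mem_filter.1 hS).1))]
  refine Finset.sum_congr rfl fun i _ => ?_
  rw [Finset.sum_congr rfl fun S hS => by rw [(Finset.mem_filter.1 hS).2], Finset.sum_const,
    nsmul_eq_mul, mul_comm, Finset.filter_filter, fcount]
  simp only [and_comm]

theorem chi_eq_zero_of_cone {A : Finset (Fin n × Fin n)} {e : Fin n × Fin n} (he : e ∈ A)
    (hcone : ∀ q ∈ A, q ≠ e → P.NCr e q) : P.chi A = 0 := by
  rw [chi_eq_sum]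
  exact Finset.sum_pairwise_neg_one_pow_card_eq_zero he hcone

def hull : Set (ℝ × ℝ) := convexHull ℝ (range P.V)

theorem convex_hull : Convex ℝ P.hull := convex_convexHull ℝ _

theorem isCompact_hull : IsCompact P.hull := (finite_range P.V).isCompact_convexHull (𝕜 := ℝ)

theorem vertex_mem_hull (k : Fin n) : P.V k ∈ P.hull := subset_convexHull ℝ _ (mem_range_self k)

theorem vertex_mem_boundary (k : Fin n) : P.V k ∈ P.boundary :=
  mem_iUnion.2 ⟨k, left_mem_segment ℝ _ _⟩

theorem boundary_subset_hull : P.boundary ⊆ P.hull :=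
  iUnion_subset fun i =>
    P.convex_hull.segment_subset (P.vertex_mem_hull i) (P.vertex_mem_hull (i + 1))

theorem apply_le_of_mem_hull {f : (ℝ × ℝ) →ₗ[ℝ] ℝ} {c : ℝ} (h : ∀ k, f (P.V k) ≤ c) {x : ℝ × ℝ}
    (hx : x ∈ P.hull) : f x ≤ c :=
  convexHull_min (range_subset_iff.2 h) (convex_halfSpace_le f.isLinear c) hx

theorem mem_boundary_of_mem_segment {a b : Fin n} (hadj : b = a + 1 ∨ a = b + 1) {x : ℝ × ℝ}
    (hx : x ∈ segment ℝ (P.V a) (P.V b)) : x ∈ P.boundary := by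
  rcases hadj with rfl | rfl
  · exact mem_iUnion.2 ⟨a, hx⟩
  · exact mem_iUnion.2 ⟨b, segment_symm ℝ (P.V (b + 1)) (P.V b) ▸ hx⟩

theorem affineSpan_range_vertex_eq_top : affineSpan ℝ (range P.V) = ⊤ := by
  have h3 := P.three_le
  let i : Fin 3 → Fin n := fun j => ⟨j, by omega⟩
  have hind : AffineIndependent ℝ ![P.V (i 0), P.V (i 1), P.V (i 2)] :=
    affineIndependent_iff_not_collinear_set.2 <|
      P.gen_pos _ _ _ (by simp [i, Fin.ext_iff]) (by simp [i, Fin.ext_iff])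
        (by simp [i, Fin.ext_iff])
  refine top_unique ((hind.affineSpan_eq_top_iff_card_eq_finrank_add_one.2 (by simp)).ge.trans
    (affineSpan_mono ℝ ?_))
  rintro _ ⟨j, rfl⟩
  fin_cases j <;> exact mem_range_self _

theorem interior_hull_nonempty : (interior P.hull).Nonempty := by
  rw [P.convex_hull.interior_nonempty_iff_affineSpan_eq_top, hull, affineSpan_convexHull,
    affineSpan_range_vertex_eq_top]

/-- At most two vertices lie on a line. -/
theorem exists_forall_apply_eq_iff {f : (ℝ × ℝ) →ₗ[ℝ] ℝ} (hf : f ≠ 0) {c : ℝ} {a : Fin n}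
    (ha : f (P.V a) = c) : ∃ b, ∀ k, f (P.V k) = c ↔ k = a ∨ k = b := by
  by_cases h : ∃ b ≠ a, f (P.V b) = c
  · obtain ⟨b, hba, hb⟩ := h
    refine ⟨b, fun k => ⟨fun hk => ?_, by rintro (rfl | rfl) <;> assumption⟩⟩
    by_contra! hk'
    exact P.gen_pos a b k hba.symm hk'.2.symm hk'.1.symm
      ((collinear_setOf_apply_eq (by simp) hf c).subset
        (by rintro _ (rfl | rfl | rfl) <;> assumption))
  · push Not at h
    exact ⟨a, fun k => ⟨fun hk => .inl (by_contra fun hka => h k hka hk),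
      by rintro (rfl | rfl) <;> assumption⟩⟩

/-- `V a V b` is an edge of the convex hull of the vertices. -/
def IsHullEdge (a b : Fin n) : Prop :=
  a ≠ b ∧ ∃ (f : (ℝ × ℝ) →ₗ[ℝ] ℝ) (c : ℝ),
    (∀ k, f (P.V k) ≤ c) ∧ ∀ k, f (P.V k) = c ↔ k = a ∨ k = b

/-- A boundary point of the hull lies on a supporting line, which meets the hull in a vertex or
in a hull edge. -/
theorem frontier_hull_subset_boundary (hadj : ∀ a b, P.IsHullEdge a b → b = a + 1 ∨ a = b + 1) :
    frontier P.hull ⊆ P.boundary := by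
  intro x hx
  obtain ⟨z, hz⟩ := P.interior_hull_nonempty
  obtain ⟨g, hg⟩ := geometric_hahn_banach_open_point P.convex_hull.interior isOpen_interior hx.2
  let f : (ℝ × ℝ) →ₗ[ℝ] ℝ := g
  have hclosure : closure (interior P.hull) = P.hull := by
    rw [P.convex_hull.closure_interior_eq_closure_of_nonempty_interior ⟨z, hz⟩,
      P.isCompact_hull.isClosed.closure_eq]
  have hle : ∀ k, f (P.V k) ≤ f x := fun k =>
    closure_minimal (fun y hy => (hg y hy).le) (isClosed_le g.continuous continuous_const)
      (hclosure.symm ▸ P.vertex_mem_hull k)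
  have hf : f ≠ 0 := fun h => (hg z hz).ne (by simp [f, ← ContinuousLinearMap.coe_coe g, h])
  have hxK : x ∈ convexHull ℝ (range P.V ∩ {y | f y = f x}) :=
    f.mem_convexHull_inter_of_apply_eq (forall_mem_range.2 hle)
      (P.isCompact_hull.isClosed.frontier_subset hx) rfl
  obtain ⟨_, ⟨a, rfl⟩, ha⟩ := convexHull_nonempty_iff.1 ⟨x, hxK⟩
  obtain ⟨b, hab⟩ := P.exists_forall_apply_eq_iff hf ha
  have hseg : x ∈ segment ℝ (P.V a) (P.V b) := by
    rw [← convexHull_pair]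
    refine convexHull_mono ?_ hxK
    rintro _ ⟨⟨k, rfl⟩, hk⟩
    rcases (hab k).1 hk with rfl | rfl <;> simp
  rcases eq_or_ne a b with rfl | hne
  · rw [segment_same, mem_singleton_iff] at hseg
    exact hseg ▸ P.vertex_mem_boundary a
  · exact P.mem_boundary_of_mem_segment (hadj a b ⟨hne, f, f x, hle, hab⟩) hseg

theorem mem_exteriorRegion_of_forall_le (f : (ℝ × ℝ) →ₗ[ℝ] ℝ) {x y : ℝ × ℝ}
    (hxb : x ∉ P.boundary) (hb : ∀ z ∈ P.boundary, f z ≤ f x) (hy : f y < f x) :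
    x ∈ P.exteriorRegion := by
  have hw : x - y ≠ 0 := sub_ne_zero.2 fun h => hy.ne (by rw [h])
  refine ⟨hxb, not_isBounded_connectedComponentIn_of_ray_subset hw fun t ht hmem => ?_⟩
  rcases ht.eq_or_lt with rfl | ht
  · exact hxb (by simpa using hmem)
  · have := hb _ hmem
    rw [map_add, map_smul, map_sub, smul_eq_mul] at this
    nlinarith

theorem compl_hull_subset_exteriorRegion : P.hullᶜ ⊆ P.exteriorRegion := by
  intro x hx
  obtain ⟨g, u, hg, hu⟩ :=
    geometric_hahn_banach_closed_point P.convex_hull P.isCompact_hull.isClosed hx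
  exact P.mem_exteriorRegion_of_forall_le g (fun h => hx (P.boundary_subset_hull h))
    (fun z hz => ((hg z (P.boundary_subset_hull hz)).trans hu).le)
    ((hg _ (P.vertex_mem_hull 0)).trans hu)

theorem interiorRegion_subset_hull : P.interiorRegion ⊆ P.hull :=
  fun _ hx => by_contra fun h => (P.compl_hull_subset_exteriorRegion h).2 hx.2

theorem hull_diff_boundary_subset_interiorRegion (hfr : frontier P.hull ⊆ P.boundary) :
    P.hull \ P.boundary ⊆ P.interiorRegion := by
  have hint : ∀ y ∈ P.hull, y ∉ P.boundary → y ∈ interior P.hull :=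
    fun y hy hyb => by_contra fun h => hyb (hfr ⟨subset_closure hy, h⟩)
  rintro x ⟨hx, hxb⟩
  refine ⟨hxb, P.isCompact_hull.isBounded.subset (subset_trans ?_ interior_subset)⟩
  refine isPreconnected_connectedComponentIn.subset_of_closure_inter_subset isOpen_interior
    ⟨x, mem_connectedComponentIn hxb, hint x hx hxb⟩ ?_
  rintro y ⟨hy, hyC⟩
  exact hint y (closure_minimal interior_subset P.isCompact_hull.isClosed hy)
    (connectedComponentIn_subset _ _ hyC)

theorem isConvexPolygon_of_frontier_hull_subset_boundary (hfr : frontier P.hull ⊆ P.boundary) :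
    P.IsConvexPolygon := by
  have : P.interiorRegion ∪ P.boundary = P.hull :=
    (union_subset P.interiorRegion_subset_hull P.boundary_subset_hull).antisymm fun x hx =>
      (em (x ∈ P.boundary)).elim Or.inr fun hxb =>
        Or.inl (P.hull_diff_boundary_subset_interiorRegion hfr ⟨hx, hxb⟩)
  rw [IsConvexPolygon, this]
  exact P.convex_hull

theorem exists_isHullEdge_not_adjacent (hP : ¬ P.IsConvexPolygon) :
    ∃ a b, P.IsHullEdge a b ∧ b ≠ a + 1 ∧ a ≠ b + 1 := by
  by_contra! h
  exact hP (P.isConvexPolygon_of_frontier_hull_subset_boundary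
    (P.frontier_hull_subset_boundary fun a b hab => or_iff_not_imp_left.2 (h a b hab)))

variable {P} {a b : Fin n}

theorem IsHullEdge.symm (h : P.IsHullEdge a b) : P.IsHullEdge b a := by
  obtain ⟨hab, f, c, hle, hiff⟩ := h
  exact ⟨hab.symm, f, c, hle, fun k => (hiff k).trans or_comm⟩

/-- All other vertices lie strictly on one side of the line `V a V b`, so no edge meets the open
chord, and a ray from the chord away from that side escapes to infinity. -/
theorem IsHullEdge.chordSeg_subset_exteriorRegion (h : P.IsHullEdge a b) (h₁ : b ≠ a + 1)
    (h₂ : a ≠ b + 1) : P.chordSeg (a, b) ⊆ P.exteriorRegion := by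
  obtain ⟨hab, f, c, hle, hiff⟩ := h
  intro x hx
  have hfx : f x = c := (convex_hyperplane f.isLinear c).openSegment_subset
    ((hiff a).2 (.inl rfl)) ((hiff b).2 (.inr rfl)) hx
  have hVab : P.V a ≠ P.V b := P.inj.ne hab
  have hvertex : ∀ k, x ≠ P.V k := by
    rintro k rfl
    rcases (hiff k).1 hfx with rfl | rfl
    · exact hVab (left_mem_openSegment_iff.1 hx)
    · exact hVab (right_mem_openSegment_iff.1 hx)
  have hxb : x ∉ P.boundary := by
    intro hxb
    obtain ⟨i, hi⟩ := mem_iUnion.1 hxb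
    rcases f.eq_or_eq_or_apply_eq_of_mem_segment (hle i) (hle (i + 1)) hi hfx with
      hxi | hxi | ⟨hi₁, hi₂⟩
    · exact hvertex i hxi
    · exact hvertex (i + 1) hxi
    have hne := Fin.add_one_ne_self (by linarith [P.three_le]) i
    rcases (hiff i).1 hi₁ with rfl | rfl <;> rcases (hiff (i + 1)).1 hi₂ with h | h
    exacts [hne h, h₁ h.symm, h₂ h.symm, hne h]
  obtain ⟨k, hka, hkb⟩ := Fin.exists_ne_and_ne_of_two_lt a b P.three_le
  refine P.mem_exteriorRegion_of_forall_le f hxb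
    (fun z hz => hfx ▸ P.apply_le_of_mem_hull hle (P.boundary_subset_hull hz)) (y := P.V k) ?_
  exact hfx ▸ (hle k).lt_of_ne fun h => ((hiff k).1 h).elim hka hkb

/-- Every other chord has an endpoint strictly on the polygon's side of the line `V a V b`. -/
theorem IsHullEdge.ncr (h : P.IsHullEdge a b) (hlt : a < b) {q : Fin n × Fin n} (hq : IsChord q)
    (hqe : q ≠ (a, b)) : P.NCr (a, b) q := by
  obtain ⟨-, f, c, hle, hiff⟩ := h
  rw [NCr, Set.disjoint_left]
  intro x hx hxq
  have hfx : f x = c := (convex_hyperplane f.isLinear c).openSegment_subset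
    ((hiff a).2 (.inl rfl)) ((hiff b).2 (.inr rfl)) hx
  have hoff : f (P.V q.1) < c ∨ f (P.V q.2) < c := by
    by_contra! hon
    have hq₁₂ := hq.1
    rcases (hiff q.1).1 ((hle _).antisymm hon.1) with h₁ | h₁ <;>
      rcases (hiff q.2).1 ((hle _).antisymm hon.2) with h₂ | h₂ <;> rw [h₁, h₂] at hq₁₂
    exacts [hq₁₂.false, hqe (Prod.ext h₁ h₂), lt_asymm hq₁₂ hlt, hq₁₂.false]
  rcases hoff with hoff | hoff
  · exact (f.apply_lt_of_mem_openSegment hoff (hle _) hxq).ne hfx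
  · rw [chordSeg, openSegment_symm] at hxq
    exact (f.apply_lt_of_mem_openSegment hoff (hle _) hxq).ne hfx

end SimplePolygon

/-- For a non-convex simple polygon, the Euler characteristic of the set of
epigonals vanishes: `χ(M_e) = 0`, i.e. `e₁ - e₂ + e₃ - ⋯ = 1` (with `e₀ = 1`). -/
theorem chi_Mepi_eq_zero_of_nonconvex {n : ℕ} [NeZero n] (P : SimplePolygon n)
    (hP : ¬ P.IsConvexPolygon) : P.chi P.Mepi = 0 := by
  obtain ⟨a, b, hab, h₁, h₂⟩ := P.exists_isHullEdge_not_adjacent hP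
  wlog hlt : a < b generalizing a b
  · exact this b a hab.symm h₂ h₁ (hab.1.symm.lt_of_le (not_lt.1 hlt))
  have he : (a, b) ∈ P.Mepi :=
    Finset.mem_filter.2
      ⟨Finset.mem_univ _, ⟨hlt, h₁, h₂⟩, hab.chordSeg_subset_exteriorRegion h₁ h₂⟩
  exact P.chi_eq_zero_of_cone he fun q hq hqe => hab.ncr hlt (Finset.mem_filter.1 hq).2.1 hqe
end

section
/- For any a ∈ ℕ⁺ and n ∈ ℕ⁺, Σ_{k=1}^{n} (−1)^{k−1} · (1/(k+1)) · C(n,k) · C(a(n+1)+k+1, k) = 1 + (−1)^{n+1} · C(a(n+1), n)/(n+1). -/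
/-!
After multiplying by `n + 1` and rewriting `C(n,k)/(k+1) = C(n+1,k+1)/(n+1)` and
`C(m+k+1, k) = C(m+k+1, m+1)` (with `m = a(n+1)`), the sum is, up to its first two terms,
`∑_{j ≤ n+1} (-1)^j C(n+1, j) C(m+j, m+1)`, i.e. `(-1)^(n+1)` times the `(n+1)`-st forward
difference of `x ↦ C(x, m+1)` at `m`. As `Δ C(x, r+1) = C(x, r)`, that difference is
`C(m, m-n) = C(m, n)` when `n ≤ m`, and it vanishes (as does `C(m, n)`) when `n > m`.
-/

open Finset fwdDiff

lemma fwdDiff_iter_choose_eq_zero_of_lt {j k : ℕ} (h : j < k) :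
    Δ_[1] ^[k] (fun x ↦ x.choose j : ℕ → ℤ) = 0 := by
  obtain ⟨l, rfl⟩ := Nat.exists_eq_add_of_lt h
  ext y
  have hconst : Δ_[1] ^[j] (fun x ↦ x.choose j : ℕ → ℤ) = fun _ ↦ 1 := by
    simpa using fwdDiff_iter_choose 0 j
  rw [show j + l + 1 = l + 1 + j by ring, Function.iterate_add_apply, hconst,
    Function.iterate_succ_apply, fwdDiff_const]
  simp [fwdDiff_iter_eq_sum_shift]

lemma fwdDiff_iter_succ_choose_succ_apply_self (m n : ℕ) :
    Δ_[1] ^[n + 1] (fun x ↦ x.choose (m + 1) : ℕ → ℤ) m = m.choose n := by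
  rcases le_or_gt n m with hnm | hmn
  · obtain ⟨j, rfl⟩ := Nat.exists_eq_add_of_le hnm
    rw [show n + j + 1 = n + 1 + j by ring, fwdDiff_iter_choose, Nat.choose_symm_add]
  · rw [fwdDiff_iter_choose_eq_zero_of_lt (by omega), Nat.choose_eq_zero_of_lt hmn]
    simp

lemma sum_range_neg_one_pow_mul_choose_mul_eq_fwdDiff_iter {R : Type*} [CommRing R]
    (f : ℕ → R) (n y : ℕ) :
    ∑ i ∈ range (n + 1), (-1 : R) ^ i * n.choose i * f (y + i) =
      (-1) ^ n * Δ_[1] ^[n] f y := by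
  rw [fwdDiff_iter_eq_sum_shift, mul_sum]
  refine sum_congr rfl fun i hi ↦ ?_
  obtain ⟨d, rfl⟩ := Nat.exists_eq_add_of_le (Nat.lt_succ_iff.mp (mem_range.mp hi))
  rw [Nat.add_sub_cancel_left, zsmul_eq_mul, smul_eq_mul, mul_one]
  have hsq : (-1 : R) ^ d * (-1) ^ d = 1 := by rw [← mul_pow]; simp
  push_cast
  linear_combination (-(-1 : R) ^ i * (i + d).choose i * f (y + i)) * hsq

lemma sum_range_neg_one_pow_mul_choose_mul_choose (m n : ℕ) :
    ∑ i ∈ range (n + 2), (-1 : ℤ) ^ i * (n + 1).choose i * (m + i).choose (m + 1) =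
      (-1) ^ (n + 1) * m.choose n := by
  calc _ = (-1) ^ (n + 1) * Δ_[1] ^[n + 1] (fun x ↦ (x.choose (m + 1) : ℤ)) m :=
        sum_range_neg_one_pow_mul_choose_mul_eq_fwdDiff_iter _ (n + 1) m
    _ = _ := by rw [fwdDiff_iter_succ_choose_succ_apply_self]

lemma choose_mul_choose_div_eq (m n k : ℕ) :
    (n.choose k : ℚ) * (m + k + 1).choose k / (k + 1) =
      (n + 1).choose (k + 1) * (m + (k + 1)).choose (m + 1) / (n + 1) := by
  have hpascal : ((n : ℚ) + 1) * n.choose k = (n + 1).choose (k + 1) * ((k : ℚ) + 1) := by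
    exact_mod_cast Nat.add_one_mul_choose_eq n k
  rw [add_assoc, Nat.choose_symm_of_eq_add (by ring : m + (k + 1) = k + (m + 1))]
  field_simp
  linear_combination ((m + (k + 1)).choose (m + 1) : ℚ) * hpascal

theorem sum_Icc_neg_one_pow_mul_choose_mul_choose_div (m n : ℕ) :
    ∑ k ∈ Icc 1 n,
        (-1 : ℚ) ^ (k - 1) * ((n.choose k : ℚ) * (m + k + 1).choose k / (k + 1)) =
      1 + (-1 : ℚ) ^ (n + 1) * m.choose n / (n + 1) := by
  have hfull : ∑ i ∈ range (n + 2), (-1 : ℚ) ^ i * (n + 1).choose i * (m + i).choose (m + 1) =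
      (-1) ^ (n + 1) * m.choose n := by
    exact_mod_cast sum_range_neg_one_pow_mul_choose_mul_choose m n
  rw [sum_range_succ', sum_range_succ'] at hfull
  simp only [zero_add, add_zero, pow_zero, pow_one, Nat.choose_succ_self, Nat.choose_self,
    Nat.choose_zero_right, Nat.choose_one_right, Nat.cast_zero, Nat.cast_one, mul_zero, mul_one,
    one_mul, neg_mul] at hfull
  have hsign (k : ℕ) : (-1 : ℚ) ^ (k + 1 + 1) = (-1) ^ k := by ring
  simp only [hsign] at hfull
  rw [← Ico_add_one_right_eq_Icc, sum_Ico_eq_sum_range, Nat.add_sub_cancel]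
  simp_rw [add_comm 1 (_ : ℕ), Nat.add_sub_cancel, choose_mul_choose_div_eq, ← mul_div_assoc,
    ← sum_div]
  field_simp
  push_cast at hfull
  linear_combination hfull

theorem alternating_sum_dk_general (a n : ℕ) :
    ∑ k ∈ Finset.Icc 1 n,
        (-1 : ℚ) ^ (k - 1) *
          ((n.choose k : ℚ) * ((a * (n + 1) + k + 1).choose k : ℚ) / (k + 1)) =
      1 + (-1 : ℚ) ^ (n + 1) * ((a * (n + 1)).choose n : ℚ) / (n + 1) :=
  sum_Icc_neg_one_pow_mul_choose_mul_choose_div (a * (n + 1)) n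

/-- With `d_k(n,a) = C(n,k) · C(a(n+1)+k+1, k) / (k+1)`, the alternating sum
`Σ_{k=1}^{n} (−1)^{k−1} d_k(n,a)` equals `1 + (−1)^{n+1} C(a(n+1), n)/(n+1)`. -/
theorem alternating_sum_dk (a n : ℕ) (ha : 0 < a) (hn : 0 < n) :
    ∑ k ∈ Finset.Icc 1 n,
        (-1 : ℚ) ^ (k - 1) *
          ((n.choose k : ℚ) * ((a * (n + 1) + k + 1).choose k : ℚ) / (k + 1)) =
      1 + (-1 : ℚ) ^ (n + 1) * ((a * (n + 1)).choose n : ℚ) / (n + 1) :=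
  alternating_sum_dk_general a n
end
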